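/- arXiv:2107.05902 — 3 statements merged into one kernel-verified Lean document; each statement's English description precedes it below -/
import Mathlib

section
/- With M, s₃, s₅ as above, the image (s₅ − 1)M equals 2M, the subgroup of elements divisible by 2 in M. -/
/-- `M = (ℤ/4ℤ)⁵ ⊕ (ℤ/2ℤ)`, the Mordell–Weil group `Jac(C₄)(ℚ(ζ₈))` in the
basis `e₁,…,e₆` (with `e₆` of order 2). -/
abbrev M : Type := (Fin 5 → ZMod 4) × ZMod 2

/-- Reduction `ℤ/4ℤ → ℤ/2ℤ`. -/
def r : ZMod 4 → ZMod 2 := ZMod.castHom (show (2:ℕ) ∣ 4 by norm_num) (ZMod 2)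

/-- The lift `ℤ/2ℤ → ℤ/4ℤ`, `a ↦ 2a` (used for matrix entries `2` in the
`e₆`-column). -/
def l : ZMod 2 → ZMod 4 := fun a => 2 * (a.val : ZMod 4)

/-- The matrix `s₃ = [[2,1,0,0,3,0],[1,2,0,0,3,0],[1,1,3,2,0,2],[1,3,0,3,0,0],
[0,0,0,0,1,0],[0,0,0,0,1,1]]` acting on `M`. -/
def s3 : M → M := fun x =>
  (![2 * x.1 0 + x.1 1 + 3 * x.1 4,
     x.1 0 + 2 * x.1 1 + 3 * x.1 4,
     x.1 0 + x.1 1 + 3 * x.1 2 + 2 * x.1 3 + l x.2,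
     x.1 0 + 3 * x.1 1 + 3 * x.1 3,
     x.1 4],
   r (x.1 4) + x.2)

/-- The matrix `s₅ = [[1,2,0,0,2,0],[2,1,0,0,2,0],[2,2,3,0,0,0],[2,0,2,3,0,2],
[0,0,0,0,3,0],[0,0,0,0,0,1]]` acting on `M`. -/
def s5 : M → M := fun x =>
  (![x.1 0 + 2 * x.1 1 + 2 * x.1 4,
     2 * x.1 0 + x.1 1 + 2 * x.1 4,
     2 * x.1 0 + 2 * x.1 1 + 3 * x.1 2,
     2 * x.1 0 + 2 * x.1 2 + 3 * x.1 3 + l x.2,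
     3 * x.1 4],
   x.2)

/-- Every entry of `s₅ − 1` is even: `s₅ − 1 = 2A` with `A` read off row by row. -/
def halfS5SubOne (x : M) : M :=
  (![x.1 1 + x.1 4, x.1 0 + x.1 4, x.1 0 + x.1 1 + x.1 2,
     x.1 0 + x.1 2 + x.1 3 + (x.2.val : ZMod 4), x.1 4], 0)

theorem s5_sub_self_eq_two_smul (x : M) : s5 x - x = 2 • halfS5SubOne x := by
  refine Prod.ext (funext fun i => ?_) (by simp [s5, halfS5SubOne])
  fin_cases i <;> simp [s5, l, halfS5SubOne] <;> ring

/-- The `(ℤ/4)⁵`-block of `A` is invertible modulo 2; its inverse gives a preimage of `2m`. -/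
def s5SubOnePreimage (m : M) : M :=
  (![m.1 1 - m.1 4, m.1 0 - m.1 4, m.1 2 - m.1 0 - m.1 1 + 2 * m.1 4,
     m.1 3 + m.1 0 - m.1 2 - m.1 4, m.1 4], 0)

theorem s5_sub_self_preimage (m : M) :
    s5 (s5SubOnePreimage m) - s5SubOnePreimage m = 2 • m := by
  refine Prod.ext (funext fun i => ?_) ?_
  · fin_cases i <;> simp [s5, l, s5SubOnePreimage] <;> ring
  · simp [s5, s5SubOnePreimage, two_smul, CharTwo.add_self_eq_zero]

/-- The image `(s₅ − 1)M` equals `2M`, the subgroup of elements of `M`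
divisible by 2. -/
theorem stmt10 : ∀ y : M, (∃ x : M, s5 x - x = y) ↔ ∃ m : M, y = 2 • m := by
  intro y
  constructor
  · rintro ⟨x, rfl⟩
    exact ⟨_, s5_sub_self_eq_two_smul x⟩
  · rintro ⟨m, rfl⟩
    exact ⟨_, s5_sub_self_preimage m⟩
end

section
/- With M, s₃ as above, every element a₁e₁ + ⋯ + a₆e₆ in the image (s₃ − 1)M satisfies the congruence a₂ + a₃ + a₆ ≡ 0 (mod 2). The same congruence holds for every element of (s₃s₅ − 1)M. -/
theorem r_add (a b : ZMod 4) : r (a + b) = r a + r b := map_add _ a b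

theorem r_mul (a b : ZMod 4) : r (a * b) = r a * r b := map_mul _ a b

theorem r_two : r 2 = 0 := rfl

theorem r_three : r 3 = 1 := rfl

theorem r_l (b : ZMod 2) : r (l b) = 0 := by
  rw [l, r_mul, r_two, zero_mul]

def parityForm : M →+ ZMod 2 where
  toFun y := r (y.1 1) + r (y.1 2) + y.2
  map_zero' := by simp [r]
  map_add' y z := by simp only [Prod.fst_add, Prod.snd_add, Pi.add_apply, r_add]; abel

theorem parityForm_apply (y : M) : parityForm y = r (y.1 1) + r (y.1 2) + y.2 := rfl

theorem parityForm_s3 (x : M) : parityForm (s3 x) = parityForm x := by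
  simp only [parityForm_apply, s3, Matrix.cons_val, r_add, r_mul, r_two, r_three, r_l]
  ring_nf
  reduce_mod_char

theorem parityForm_s5 (x : M) : parityForm (s5 x) = parityForm x := by
  simp only [parityForm_apply, s5, Matrix.cons_val, r_add, r_mul, r_two, r_three]
  ring

theorem AddMonoidHom.map_sub_self_eq_zero {A B : Type*} [AddGroup A] [AddGroup B]
    (φ : A →+ B) {f : A → A} (hf : ∀ x, φ (f x) = φ x) (x : A) : φ (f x - x) = 0 := by
  rw [map_sub, hf, sub_self]

/-- Every element `a₁e₁ + ⋯ + a₆e₆` of `(s₃ − 1)M` satisfies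
`a₂ + a₃ + a₆ ≡ 0 (mod 2)`, and likewise for `(s₃s₅ − 1)M`. -/
theorem stmt11 (x : M) :
    r ((s3 x - x).1 1) + r ((s3 x - x).1 2) + (s3 x - x).2 = 0 ∧
    r ((s3 (s5 x) - x).1 1) + r ((s3 (s5 x) - x).1 2) + (s3 (s5 x) - x).2 = 0 :=
  ⟨parityForm.map_sub_self_eq_zero parityForm_s3 x,
    parityForm.map_sub_self_eq_zero (fun y => (parityForm_s3 _).trans (parityForm_s5 y)) x⟩
end

section
/- In M = (ℤ/4ℤ)⁵ ⊕ (ℤ/2ℤ), the element 2e₁ + 2e₃ + 3e₄ is not divisible by 2, i.e., it does not lie in 2M. Combined with (s₅−1)M = 2M, this shows the affine map x ↦ s₅x + (2e₁ + 2e₃ + 3e₄) has no fixed point in M. -/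
/-- `2e₁ + 2e₃ + 3e₄ = (σ₅−1)[A₀]`. -/
def v : M := (![2, 0, 2, 3, 0], 0)

/-! The matrix `s₅ - 1` has all entries even, so `(s₅ - 1)M ⊆ 2M`: a fixed point `x = s₅x + v`
would give `v = -(s₅ - 1)x ∈ 2M`. But the `e₄`-coordinate `3` of `v` is odd, and reducing mod 2
shows that no odd residue mod 4 is twice another. -/

theorem ZMod.two_mul_add_one_ne_two_mul {n : ℕ} (hn : 2 ∣ n) (a b : ZMod n) :
    2 * a + 1 ≠ 2 * b := by
  intro h
  have h2 := congrArg (ZMod.castHom hn (ZMod 2)) h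
  rw [map_add, map_mul, map_mul, map_ofNat, map_one] at h2
  have two_eq_zero : (2 : ZMod 2) = 0 := rfl
  simp [two_eq_zero] at h2

theorem v_ne_two_smul (m : M) : v ≠ 2 • m := by
  intro h
  have h3 : (3 : ZMod 4) = 2 * m.1 3 := by simpa [v] using congrFun (congrArg Prod.fst h) 3
  exact ZMod.two_mul_add_one_ne_two_mul (n := 4) (by norm_num) 1 (m.1 3) (by rw [← h3]; rfl)

theorem s5_sub_self_eq_two_smul_s12 (x : M) :
    s5 x - x = 2 • ((![x.1 1 + x.1 4, x.1 0 + x.1 4, x.1 0 + x.1 1 + x.1 2,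
      x.1 0 + x.1 2 + x.1 3 + (x.2.val : ZMod 4), x.1 4], 0) : M) := by
  ext i
  · fin_cases i <;> simp [s5, l] <;> ring
  · simp [s5]

/-- `2e₁ + 2e₃ + 3e₄` is not divisible by 2 in `M`; combined with
`(s₅−1)M = 2M`, the affine map `x ↦ s₅x + (2e₁+2e₃+3e₄)` has no fixed point. -/
theorem stmt12 : (¬ ∃ m : M, v = 2 • m) ∧ (∀ x : M, s5 x + v ≠ x) := by
  refine ⟨fun ⟨m, h⟩ => v_ne_two_smul m h, fun x hx => ?_⟩
  obtain ⟨m, hm⟩ : ∃ m : M, s5 x - x = 2 • m := ⟨_, s5_sub_self_eq_two_smul_s12 x⟩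
  refine v_ne_two_smul (-m) ?_
  rw [smul_neg, ← hm, neg_sub, eq_sub_of_add_eq' hx]
end
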